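/- Let X be a simplicial complex on V with L(X) = M(X) = 2 that admits a weak shelling ≺ with M_≺(X) = M(X). Then for every W ⊆ V with H̃_1(X[W]) ≠ 0, the graph given by the 1-skeleton of X[W] contains an induced cycle whose homology class generates H̃_1(X[W]), and moreover dim H̃_1(X[W]) ≤ 1. -/

import Mathlib

open Finset

variable {V : Type*} [DecidableEq V] [Fintype V]

/-- An abstract simplicial complex: a finite collection of faces closed under subsets. -/
def IsComplex (X : Finset (Finset V)) : Prop :=
  ∀ s ∈ X, ∀ t, t ⊆ s → t ∈ X

/-- A collection of faces is a simplex if it is the full power set of some vertex set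
(possibly empty). -/
def IsSimplexC (Y : Finset (Finset V)) : Prop := ∃ τ : Finset V, Y = τ.powerset

/-- The induced subcomplex `X[W]`. -/
def indOn (X : Finset (Finset V)) (W : Finset V) : Finset (Finset V) :=
  X.filter (fun s => s ⊆ W)

/-- The `ℤ/2ℤ` boundary of a chain, a chain being recorded as the finite set of faces with
coefficient `1`.  The coefficient of `τ` in `∂ c` is the parity of the number of faces of `c`
covering `τ`.  (This includes the augmentation `∂₀`, with `∅` playing the role of the
generator of `C₋₁`, so homology is reduced homology.) -/
def bdry (c : Finset (Finset V)) : Finset (Finset V) :=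
  Finset.univ.filter (fun τ => Odd (c.filter (fun s => τ ⊆ s ∧ s.card = τ.card + 1)).card)

/-- Sum of chains over `ℤ/2ℤ` (symmetric difference). -/
def chAdd (c d : Finset (Finset V)) : Finset (Finset V) := (c \ d) ∪ (d \ c)

/-- An `n`-dimensional chain of `X` (each face has `n+1` vertices). -/
def IsNChain (X : Finset (Finset V)) (n : ℕ) (c : Finset (Finset V)) : Prop :=
  c ⊆ X ∧ ∀ s ∈ c, s.card = n + 1

/-- An `n`-cycle of `X` (reduced: `0`-cycles have evenly many vertices). -/
def IsNCycle (X : Finset (Finset V)) (n : ℕ) (c : Finset (Finset V)) : Prop :=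
  IsNChain X n c ∧ bdry c = ∅

/-- An `n`-boundary of `X`. -/
def IsNBdry (X : Finset (Finset V)) (n : ℕ) (c : Finset (Finset V)) : Prop :=
  ∃ d, IsNChain X (n + 1) d ∧ bdry d = c

/-- `X` is `d`-Leray: all reduced homology of induced subcomplexes vanishes in
dimensions `≥ d`. -/
def IsLeray (X : Finset (Finset V)) (d : ℕ) : Prop :=
  ∀ W : Finset V, ∀ i : ℕ, d ≤ i → ∀ c,
    IsNCycle (indOn X W) i c → IsNBdry (indOn X W) i c

/-- The Leray number `L(X)`. -/
noncomputable def lerayNum (X : Finset (Finset V)) : ℕ := sInf {d | IsLeray X d}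

/-- The facets (maximal faces) of `X`. -/
def facetsOf (X : Finset (Finset V)) : Finset (Finset V) :=
  X.filter (fun s => ∀ t ∈ X, s ⊆ t → s = t)

/-- `σ 0, …, σ (m-1)` is an enumeration (linear ordering) of the facets of `X`. -/
def IsFacetEnum (X : Finset (Finset V)) (m : ℕ) (σ : ℕ → Finset V) : Prop :=
  (∀ i, i < m → σ i ∈ facetsOf X) ∧ (∀ s ∈ facetsOf X, ∃ i, i < m ∧ σ i = s) ∧
    (∀ i j, i < m → j < m → σ i = σ j → i = j)

/-- `X_j = ⋃_{i < j} Δ(σ i)`. -/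
def cUnion (σ : ℕ → Finset V) (j : ℕ) : Finset (Finset V) :=
  (Finset.range j).biUnion (fun i => (σ i).powerset)

-- `Mval σ j = M_≺(X_{j+1})`: starts at `1`, increases by `1` exactly when the newly
-- attached simplex meets the union of the previous ones in a non-simplex.
open Classical in
noncomputable def Mval (σ : ℕ → Finset V) : ℕ → ℕ
  | 0 => 1
  | (j+1) => Mval σ j + (if IsSimplexC (cUnion σ (j+1) ∩ (σ (j+1)).powerset) then 0 else 1)

/-- `M(X)`: the minimum of `M_≺(X)` over all facet orderings. -/
noncomputable def Mnum (X : Finset (Finset V)) : ℕ :=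
  sInf {k | ∃ m σ, 0 < m ∧ IsFacetEnum X m σ ∧ k = Mval σ (m - 1)}

/-- The facet ordering `σ 0 ≺ ⋯ ≺ σ (m-1)` is a weak shelling. -/
def IsWeakShelling (σ : ℕ → Finset V) (m : ℕ) : Prop :=
  ∀ j, 1 ≤ j → j < m → ∃ u ∈ σ j, IsSimplexC (indOn (cUnion σ j) ((σ j).erase u))

/-- `c` is the edge set of a cycle (graph cycle, length `≥ 3`). -/
def IsCycleEdges (c : Finset (Finset V)) : Prop :=
  ∃ n : ℕ, 3 ≤ n ∧ ∃ f : ℕ → V, (∀ i j, i < n → j < n → f i = f j → i = j) ∧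
    c = (Finset.range n).image (fun i => ({f i, f ((i + 1) % n)} : Finset V))


open scoped symmDiff

/-!
A non-bounding `1`-cycle of `X[W]` with fewest edges is an induced graph cycle: a proper
subcycle, or a chord, would split it into two shorter cycles, which bound by minimality.

For `dim H̃₁(X[W]) ≤ 1`, build `X[W]` along the shelling. Gluing a simplex along a simplex
creates no new `1`-homology, so every step but the single one where `M_≺` increases carries
the classes back. At that step the glued part is a simplex once the weak-shelling vertex `u` is
removed, so a new cycle can only be essential if `u` has odd degree in its old part; the
sum of two essential cycles fails this, hence bounds.
-/

section Chains

variable {A c d : Finset (Finset V)} {n : ℕ}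

lemma mem_bdry {τ : Finset V} :
    τ ∈ bdry c ↔ Odd #(c.filter (fun s => τ ⊆ s ∧ s.card = τ.card + 1)) := by
  simp [bdry]

lemma exists_of_mem_bdry {τ : Finset V} (h : τ ∈ bdry c) :
    ∃ s ∈ c, τ ⊆ s ∧ s.card = τ.card + 1 := by
  obtain ⟨s, hs⟩ := card_pos.mp (mem_bdry.mp h).pos
  exact ⟨s, (mem_filter.mp hs).1, (mem_filter.mp hs).2⟩

lemma mem_of_mem_bdry {K c : Finset (Finset V)} {τ : Finset V} (hK : IsComplex K) (hc : c ⊆ K)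
    (h : τ ∈ bdry c) : τ ∈ K := by
  obtain ⟨s, hs, hτs, -⟩ := exists_of_mem_bdry h
  exact hK s (hc hs) τ hτs

lemma exists_eq_singleton_of_mem_bdry {θ : Finset V} {τ : Finset V}
    (hc : IsNChain θ.powerset 1 c) (h : τ ∈ bdry c) : ∃ x ∈ θ, τ = {x} := by
  obtain ⟨s, hs, hτs, hcard⟩ := exists_of_mem_bdry h
  have hτ : τ.card = 1 := by rw [hc.2 s hs] at hcard; omega
  obtain ⟨x, rfl⟩ := card_eq_one.mp hτ
  exact ⟨x, mem_powerset.mp (hc.1 hs) (singleton_subset_iff.mp hτs), rfl⟩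

@[simp] lemma bdry_empty : bdry (∅ : Finset (Finset V)) = ∅ := by
  ext τ; simp [mem_bdry]

omit [DecidableEq V] [Fintype V] in
lemma card_symmDiff_add_two_mul_card_inter {α : Type*} [DecidableEq α] (s t : Finset α) :
    #(s ∆ t) + 2 * #(s ∩ t) = #s + #t := by
  have h₁ : #(s ∆ t) = #(s ∪ t) - #(s ∩ t) := by
    rw [symmDiff_eq_sup_sdiff_inf]; exact card_sdiff_of_subset inter_subset_union
  have h₂ := card_union_add_card_inter s t
  have h₃ : #(s ∩ t) ≤ #(s ∪ t) := card_le_card inter_subset_union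
  omega

omit [DecidableEq V] [Fintype V] in
lemma odd_card_symmDiff_iff {α : Type*} [DecidableEq α] (s t : Finset α) :
    Odd #(s ∆ t) ↔ ¬(Odd #s ↔ Odd #t) := by
  have h := card_symmDiff_add_two_mul_card_inter s t
  simp only [Nat.odd_iff]; omega

lemma bdry_symmDiff (c d : Finset (Finset V)) : bdry (c ∆ d) = bdry c ∆ bdry d := by
  ext τ
  have hfilter : (c ∆ d).filter (fun s => τ ⊆ s ∧ s.card = τ.card + 1) =
      c.filter (fun s => τ ⊆ s ∧ s.card = τ.card + 1) ∆
        d.filter (fun s => τ ⊆ s ∧ s.card = τ.card + 1) := by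
    ext s; simp only [mem_filter, mem_symmDiff]; tauto
  rw [mem_symmDiff, mem_bdry, mem_bdry, mem_bdry, hfilter, odd_card_symmDiff_iff]
  tauto

omit [DecidableEq V] [Fintype V] in
lemma IsNChain.mono {B : Finset (Finset V)} (h : IsNChain A n c) (hAB : A ⊆ B) :
    IsNChain B n c :=
  ⟨h.1.trans hAB, h.2⟩

omit [Fintype V] in
lemma IsNChain.symmDiff (hc : IsNChain A n c) (hd : IsNChain A n d) : IsNChain A n (c ∆ d) := by
  refine ⟨fun s hs => ?_, fun s hs => ?_⟩ <;> rcases mem_symmDiff.mp hs with ⟨h, -⟩ | ⟨h, -⟩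
  exacts [hc.1 h, hd.1 h, hc.2 s h, hd.2 s h]

lemma IsNCycle.symmDiff (hc : IsNCycle A n c) (hd : IsNCycle A n d) : IsNCycle A n (c ∆ d) :=
  ⟨hc.1.symmDiff hd.1, by rw [bdry_symmDiff, hc.2, hd.2, symmDiff_self]; rfl⟩

lemma isNBdry_empty (A : Finset (Finset V)) (n : ℕ) : IsNBdry A n ∅ :=
  ⟨∅, ⟨empty_subset _, by simp⟩, bdry_empty⟩

lemma IsNBdry.symmDiff (hc : IsNBdry A n c) (hd : IsNBdry A n d) : IsNBdry A n (c ∆ d) := by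
  obtain ⟨D₁, hD₁, rfl⟩ := hc
  obtain ⟨D₂, hD₂, rfl⟩ := hd
  exact ⟨D₁ ∆ D₂, hD₁.symmDiff hD₂, bdry_symmDiff D₁ D₂⟩

end Chains

def Homologous (A : Finset (Finset V)) (n : ℕ) (z z' : Finset (Finset V)) : Prop :=
  IsNBdry A n (z ∆ z')

namespace Homologous

variable {A z₁ z₂ z₃ z₄ : Finset (Finset V)} {n : ℕ}

lemma refl (A : Finset (Finset V)) (n : ℕ) (z : Finset (Finset V)) : Homologous A n z z := by
  simpa [Homologous] using isNBdry_empty A n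

lemma symm (h : Homologous A n z₁ z₂) : Homologous A n z₂ z₁ := by
  rwa [Homologous, symmDiff_comm]

lemma trans (h₁₂ : Homologous A n z₁ z₂) (h₂₃ : Homologous A n z₂ z₃) :
    Homologous A n z₁ z₃ := by
  have h := IsNBdry.symmDiff h₁₂ h₂₃
  rwa [symmDiff_assoc, symmDiff_symmDiff_cancel_left] at h

lemma symmDiff (h₁₂ : Homologous A n z₁ z₂) (h₃₄ : Homologous A n z₃ z₄) :
    Homologous A n (z₁ ∆ z₃) (z₂ ∆ z₄) := by
  have h := IsNBdry.symmDiff h₁₂ h₃₄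
  rwa [Homologous, symmDiff_symmDiff_symmDiff_comm]

lemma isNBdry_iff (h : Homologous A n z₁ z₂) : IsNBdry A n z₁ ↔ IsNBdry A n z₂ := by
  constructor <;> intro hz
  · simpa using IsNBdry.symmDiff hz h
  · simpa using IsNBdry.symmDiff hz h.symm

end Homologous

lemma exists_homologous_of_forall_lt {K : ℕ → Finset (Finset V)} {A : Finset (Finset V)}
    {n a b : ℕ} (hab : a ≤ b)
    (hstep : ∀ j, a ≤ j → j < b → ∀ z, IsNCycle (K (j + 1)) n z →
      ∃ z', IsNCycle (K j) n z' ∧ Homologous A n z z')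
    {z : Finset (Finset V)} (hz : IsNCycle (K b) n z) :
    ∃ z', IsNCycle (K a) n z' ∧ Homologous A n z z' := by
  induction b, hab using Nat.le_induction generalizing z with
  | base => exact ⟨z, hz, Homologous.refl A n z⟩
  | succ b hab ih =>
    obtain ⟨z₁, hz₁, h₁⟩ := hstep b hab (Nat.lt_add_one b) z hz
    obtain ⟨z₂, hz₂, h₂⟩ := ih (fun j hj hjb => hstep j hj (by omega)) hz₁
    exact ⟨z₂, hz₂, h₁.trans h₂⟩

section Cone

variable {v : V} {c : Finset (Finset V)}

/-- The cone `v * c` over the faces of `c` not containing `v`. -/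
def cone (v : V) (c : Finset (Finset V)) : Finset (Finset V) :=
  (c.filter (fun s => v ∉ s)).image (insert v)

omit [Fintype V] in
lemma mem_cone {t : Finset V} : t ∈ cone v c ↔ v ∈ t ∧ t.erase v ∈ c := by
  constructor
  · intro h
    obtain ⟨s, hs, rfl⟩ := mem_image.mp h
    rw [mem_filter] at hs
    exact ⟨mem_insert_self v s, by rw [erase_insert hs.2]; exact hs.1⟩
  · rintro ⟨hv, ht⟩
    exact mem_image.mpr ⟨t.erase v, mem_filter.mpr ⟨ht, notMem_erase v t⟩, insert_erase hv⟩

omit [Fintype V] in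
lemma cone_symmDiff (v : V) (c d : Finset (Finset V)) : cone v (c ∆ d) = cone v c ∆ cone v d := by
  ext t; simp only [mem_cone, mem_symmDiff]; tauto

omit [Fintype V] in
@[simp] lemma cone_cone (v : V) (c : Finset (Finset V)) : cone v (cone v c) = ∅ := by
  ext t; simp [mem_cone]

omit [Fintype V] in
@[simp] lemma cone_empty (v : V) : cone v ∅ = ∅ := by
  simp [cone]

lemma bdry_cone (hc : ∀ s ∈ c, v ∉ s) : bdry (cone v c) = c ∆ cone v (bdry c) := by
  ext τ
  rw [mem_symmDiff, mem_cone, mem_bdry]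
  by_cases hv : v ∈ τ
  · have hcard : #((cone v c).filter (fun t => τ ⊆ t ∧ t.card = τ.card + 1)) =
        #(c.filter (fun s => τ.erase v ⊆ s ∧ s.card = (τ.erase v).card + 1)) := by
      have hτ := card_erase_of_mem hv
      have hτpos := card_pos.mpr ⟨v, hv⟩
      refine card_nbij' (·.erase v) (insert v) ?_ ?_ ?_ ?_
      · intro t ht
        simp only [coe_filter, Set.mem_ofPred_eq, mem_cone] at ht ⊢
        refine ⟨ht.1.2, erase_subset_erase v ht.2.1, ?_⟩
        rw [card_erase_of_mem ht.1.1]; omega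
      · intro s hs
        simp only [coe_filter, Set.mem_ofPred_eq, mem_cone] at hs ⊢
        have hvs := hc s hs.1
        refine ⟨⟨mem_insert_self v s, by rw [erase_insert hvs]; exact hs.1⟩, ?_, ?_⟩
        · rw [← insert_erase hv]; exact insert_subset_insert v hs.2.1
        · rw [card_insert_of_notMem hvs]; omega
      · intro t ht
        simp only [coe_filter, Set.mem_ofPred_eq, mem_cone] at ht
        exact insert_erase ht.1.1
      · intro s hs
        simp only [coe_filter, Set.mem_ofPred_eq] at hs
        exact erase_insert (hc s hs.1)
    rw [hcard, ← mem_bdry]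
    have hτc : τ ∉ c := fun h => hc τ h hv
    tauto
  · have hfilter : (cone v c).filter (fun t => τ ⊆ t ∧ t.card = τ.card + 1) =
        (c.filter (· = τ)).image (insert v) := by
      ext t
      simp only [mem_filter, mem_cone, mem_image]
      constructor
      · rintro ⟨⟨hvt, htc⟩, hτt, hcard⟩
        have hτ : τ = t.erase v := by
          refine eq_of_subset_of_card_le (subset_erase.mpr ⟨hτt, hv⟩) ?_
          rw [card_erase_of_mem hvt]; omega
        exact ⟨t.erase v, ⟨htc, hτ.symm⟩, insert_erase hvt⟩
      · rintro ⟨s, ⟨hs, rfl⟩, rfl⟩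
        refine ⟨⟨mem_insert_self v s, by rw [erase_insert hv]; exact hs⟩, subset_insert v s, ?_⟩
        rw [card_insert_of_notMem hv]
    rw [hfilter, card_image_of_injOn (fun a ha b hb _ => by simp_all), filter_eq']
    split_ifs with hτc <;> simp [hv, hτc]

omit [Fintype V] in
lemma isNChain_cone {θ : Finset V} {v : V} {c : Finset (Finset V)} {n : ℕ}
    (hc : IsNChain θ.powerset n c) (hv : v ∈ θ) : IsNChain θ.powerset (n + 1) (cone v c) := by
  refine ⟨fun t ht => ?_, fun t ht => ?_⟩ <;> obtain ⟨hvt, hte⟩ := mem_cone.mp ht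
  · rw [mem_powerset, ← insert_erase hvt]
    exact insert_subset hv (mem_powerset.mp (hc.1 hte))
  · rw [← insert_erase hvt, card_insert_of_notMem (notMem_erase v t), hc.2 _ hte]

omit [Fintype V] in
lemma cone_singleton {s : Finset V} (hv : v ∉ s) : cone v {s} = {insert v s} := by
  simp [cone, filter_singleton, hv]

lemma bdry_bdry_singleton (s : Finset V) : bdry (bdry {s}) = ∅ := by
  induction s using Finset.induction_on with
  | empty =>
    have h : bdry ({∅} : Finset (Finset V)) = ∅ := by
      ext τ; simp [mem_bdry, filter_singleton]
    simp [h]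
  | insert v s hv ih =>
    have hfree : ∀ t ∈ bdry {s}, v ∉ t := fun t ht hvt => by
      obtain ⟨s', hs', hts', -⟩ := exists_of_mem_bdry ht
      rw [mem_singleton] at hs'
      exact hv (hs' ▸ hts' hvt)
    rw [← cone_singleton hv, bdry_cone (by simpa using hv), bdry_symmDiff, bdry_cone hfree, ih]
    simp

lemma bdry_bdry (c : Finset (Finset V)) : bdry (bdry c) = ∅ := by
  induction c using Finset.induction_on with
  | empty => simp
  | insert s c hs ih =>
    rw [insert_eq, ← sup_eq_union, ← (disjoint_singleton_left.mpr hs).symmDiff_eq_sup,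
      bdry_symmDiff, bdry_symmDiff, ih, bdry_bdry_singleton]
    simp

/-- Faces of `c` through `v` are cones themselves, and `v * (v * _) = 0`, which is why they may be
left out of `cone v c`. -/
lemma bdry_cone_of_bdry_eq_empty (hc : bdry c = ∅) : bdry (cone v c) = c := by
  set c₀ := c.filter (fun s => v ∉ s)
  set c₁ := c.filter (fun s => v ∈ s)
  set ℓ := c₁.image (·.erase v)
  have hc₀ : ∀ s ∈ c₀, v ∉ s := fun s hs => (mem_filter.mp hs).2
  have hℓ : ∀ s ∈ ℓ, v ∉ s := by
    intro s hs
    obtain ⟨t, -, rfl⟩ := mem_image.mp hs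
    exact notMem_erase v t
  have hsplit : c = c₀ ∆ c₁ := by
    rw [(disjoint_filter_filter_not c c (fun s => v ∈ s)).symm.symmDiff_eq_sup]
    ext s; simp only [sup_eq_union, mem_union, mem_filter]; tauto
  have hc₁ : cone v ℓ = c₁ := by
    ext t
    simp only [mem_cone, ℓ, c₁, mem_image, mem_filter]
    constructor
    · rintro ⟨hvt, s, ⟨hs, hvs⟩, hst⟩
      rw [← insert_erase hvt, ← hst, insert_erase hvs]
      exact ⟨hs, hvs⟩
    · rintro ⟨ht, hvt⟩
      exact ⟨hvt, t, ⟨ht, hvt⟩, rfl⟩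
  have hcone : cone v c = cone v c₀ := by
    ext t; simp [mem_cone, c₀]
  have hbdry : bdry c₀ = bdry c₁ := by
    rw [hsplit, bdry_symmDiff] at hc
    exact symmDiff_eq_bot.mp hc
  rw [hcone, bdry_cone hc₀, hbdry, ← hc₁, bdry_cone hℓ, cone_symmDiff, cone_cone, hc₁]
  rw [← bot_eq_empty, symmDiff_bot, ← hsplit]

end Cone

section Attach

variable {A K : Finset (Finset V)} {θ : Finset V} {z : Finset (Finset V)}

/-- `z` is replaced by `(z ∩ K) + v * ∂(z ∩ K)`, which lies in `K` by `hodd`; the difference is a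
cycle of `Δθ`, the boundary of its cone from `v`. -/
lemma exists_homologous_of_attach (hθA : θ.powerset ⊆ A) {v : V}
    (hv : v ∈ θ) (hz : IsNCycle (K ∪ θ.powerset) 1 z)
    (hodd : ∀ x ∈ θ, {x} ∈ bdry (z ∩ K) → {v, x} ∈ K) :
    ∃ z', IsNCycle K 1 z' ∧ Homologous A 1 z z' := by
  obtain ⟨⟨hzsub, hzcard⟩, hzbdry⟩ := hz
  set a := z ∩ K
  set b := z \ K
  have hzab : z = a ∆ b := by
    rw [(disjoint_sdiff_inter z K).symm.symmDiff_eq_sup, sup_eq_union, union_comm,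
      sdiff_union_inter]
  have ha : IsNChain K 1 a := ⟨inter_subset_right, fun s hs => hzcard s (mem_inter.mp hs).1⟩
  have hb : IsNChain θ.powerset 1 b := by
    refine ⟨fun s hs => ?_, fun s hs => hzcard s (mem_sdiff.mp hs).1⟩
    obtain ⟨hsz, hsK⟩ := mem_sdiff.mp hs
    exact (mem_union.mp (hzsub hsz)).resolve_left hsK
  have hbdry_ab : bdry a = bdry b := by
    rw [hzab, bdry_symmDiff] at hzbdry
    exact symmDiff_eq_bot.mp hzbdry
  set d := cone v (bdry a)
  have hdface : ∀ t ∈ d, ∃ x ∈ θ, x ≠ v ∧ t = {v, x} ∧ {x} ∈ bdry a := by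
    intro t ht
    obtain ⟨hvt, hte⟩ := mem_cone.mp ht
    obtain ⟨x, hx, hxt⟩ := exists_eq_singleton_of_mem_bdry hb (hbdry_ab ▸ hte)
    refine ⟨x, hx, fun h => ?_, by rw [← insert_erase hvt, hxt], hxt ▸ hte⟩
    exact notMem_erase v t (by rw [hxt, h]; exact mem_singleton_self v)
  have hd : IsNChain (K ∩ θ.powerset) 1 d := by
    refine ⟨fun t ht => ?_, fun t ht => ?_⟩ <;> obtain ⟨x, hx, hxv, rfl, hxa⟩ := hdface t ht
    · exact mem_inter.mpr
        ⟨hodd x hx hxa, mem_powerset.mpr (insert_subset hv (singleton_subset_iff.mpr hx))⟩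
    · exact card_pair hxv.symm
  have hdbdry : bdry d = bdry a := bdry_cone_of_bdry_eq_empty (bdry_bdry a)
  have hy : z ∆ (a ∆ d) = b ∆ d := by
    rw [hzab, symmDiff_symmDiff_symmDiff_comm, symmDiff_self, bot_symmDiff]
  have hybdry : bdry (b ∆ d) = ∅ := by
    rw [bdry_symmDiff, hdbdry, hbdry_ab, symmDiff_self]; rfl
  refine ⟨a ∆ d, ⟨ha.symmDiff (hd.mono inter_subset_left), ?_⟩, ?_⟩
  · rw [bdry_symmDiff, hdbdry, symmDiff_self]; rfl
  · show IsNBdry A 1 (z ∆ (a ∆ d))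
    rw [hy]
    exact ⟨cone v (b ∆ d), (isNChain_cone (hb.symmDiff (hd.mono inter_subset_right)) hv).mono hθA,
      bdry_cone_of_bdry_eq_empty hybdry⟩

lemma exists_homologous_of_attach_simplex (hθA : θ.powerset ⊆ A)
    {τ : Finset V} (hτθ : τ ⊆ θ) (hτK : ∀ x ∈ τ, ∀ y ∈ τ, {x, y} ∈ K)
    (hz : IsNCycle (K ∪ θ.powerset) 1 z) (hodd : ∀ x ∈ θ, {x} ∈ bdry (z ∩ K) → x ∈ τ) :
    ∃ z', IsNCycle K 1 z' ∧ Homologous A 1 z z' := by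
  rcases τ.eq_empty_or_nonempty with rfl | ⟨v, hv⟩
  · rcases θ.eq_empty_or_nonempty with rfl | ⟨v, hv⟩
    · refine ⟨z, ⟨⟨fun s hs => ?_, hz.1.2⟩, hz.2⟩, Homologous.refl A 1 z⟩
      rcases mem_union.mp (hz.1.1 hs) with h | h
      · exact h
      · have hcard := hz.1.2 s hs
        rw [powerset_empty, mem_singleton] at h
        simp [h] at hcard
    · exact exists_homologous_of_attach hθA hv hz
        fun x hx h => absurd (hodd x hx h) (notMem_empty x)
  · exact exists_homologous_of_attach hθA (hτθ hv) hz
      fun x hx h => hτK v hv x (hodd x hx h)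

end Attach

section Filtration

variable {X : Finset (Finset V)} {σ : ℕ → Finset V} {m : ℕ}

omit [Fintype V] in
@[simp] lemma cUnion_zero (σ : ℕ → Finset V) : cUnion σ 0 = ∅ := by
  simp [cUnion]

omit [Fintype V] in
lemma cUnion_succ (σ : ℕ → Finset V) (j : ℕ) :
    cUnion σ (j + 1) = cUnion σ j ∪ (σ j).powerset := by
  rw [cUnion, cUnion, range_add_one, biUnion_insert, union_comm]

omit [Fintype V] in
lemma isComplex_cUnion (σ : ℕ → Finset V) (j : ℕ) : IsComplex (cUnion σ j) := by
  intro s hs t hts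
  simp only [cUnion, mem_biUnion, mem_powerset] at hs ⊢
  obtain ⟨i, hi, hsi⟩ := hs
  exact ⟨i, hi, hts.trans hsi⟩

omit [Fintype V] in
lemma isComplex_indOn (hX : IsComplex X) (W : Finset V) : IsComplex (indOn X W) := by
  intro s hs t hts
  simp only [indOn, mem_filter] at hs ⊢
  exact ⟨hX s hs.1 t hts, hts.trans hs.2⟩

omit [Fintype V] in
lemma indOn_cUnion_succ (σ : ℕ → Finset V) (j : ℕ) (W : Finset V) :
    indOn (cUnion σ (j + 1)) W = indOn (cUnion σ j) W ∪ (σ j ∩ W).powerset := by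
  ext s
  simp only [indOn, cUnion_succ, mem_filter, mem_union, mem_powerset, subset_inter_iff]
  tauto

lemma exists_mem_facetsOf_superset {s : Finset V} (hs : s ∈ X) : ∃ t ∈ facetsOf X, s ⊆ t := by
  obtain ⟨t, ht, hmax⟩ :=
    exists_max_image (X.filter (s ⊆ ·)) card ⟨s, mem_filter.mpr ⟨hs, Subset.rfl⟩⟩
  rw [mem_filter] at ht
  refine ⟨t, mem_filter.mpr ⟨ht.1, fun t' ht' htt' => ?_⟩, ht.2⟩
  exact eq_of_subset_of_card_le htt' (hmax t' (mem_filter.mpr ⟨ht', ht.2.trans htt'⟩))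

lemma IsFacetEnum.mem (henum : IsFacetEnum X m σ) {j : ℕ} (hj : j < m) : σ j ∈ X :=
  (mem_filter.mp (henum.1 j hj)).1

lemma IsFacetEnum.cUnion_eq (hX : IsComplex X) (henum : IsFacetEnum X m σ) :
    cUnion σ m = X := by
  ext s
  simp only [cUnion, mem_biUnion, mem_range, mem_powerset]
  constructor
  · rintro ⟨i, hi, hsi⟩
    exact hX _ (henum.mem hi) s hsi
  · intro hs
    obtain ⟨t, ht, hst⟩ := exists_mem_facetsOf_superset hs
    obtain ⟨i, hi, rfl⟩ := henum.2.1 t ht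
    exact ⟨i, hi, hst⟩

open Classical in
omit [Fintype V] in
lemma Mval_eq_one_add_card (σ : ℕ → Finset V) (t : ℕ) :
    Mval σ t = 1 + #((Icc 1 t).filter fun j => ¬ IsSimplexC (cUnion σ j ∩ (σ j).powerset)) := by
  induction t with
  | zero => simp [Mval]
  | succ t ih =>
    have hIcc : Icc 1 (t + 1) = insert (t + 1) (Icc 1 t) := by
      ext k; simp only [mem_Icc, mem_insert]; omega
    rw [Mval, ih, hIcc, filter_insert]
    split_ifs
    · simp
    · rw [card_insert_of_notMem (by simp)]
      ring

open Classical in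
omit [Fintype V] in
lemma exists_forall_isSimplexC_of_Mval_eq_two {t : ℕ} (h : Mval σ t = 2) :
    ∃ j₁, 1 ≤ j₁ ∧ j₁ ≤ t ∧
      ∀ j, 1 ≤ j → j ≤ t → j ≠ j₁ → IsSimplexC (cUnion σ j ∩ (σ j).powerset) := by
  rw [Mval_eq_one_add_card] at h
  obtain ⟨j₁, hj₁⟩ := card_eq_one.mp (show #((Icc 1 t).filter fun j =>
    ¬ IsSimplexC (cUnion σ j ∩ (σ j).powerset)) = 1 by omega)
  have hmem := mem_filter.mp (hj₁ ▸ mem_singleton_self j₁)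
  refine ⟨j₁, (mem_Icc.mp hmem.1).1, (mem_Icc.mp hmem.1).2, fun j h1 h2 hne => ?_⟩
  by_contra hbad
  have : j ∈ ({j₁} : Finset ℕ) := hj₁ ▸ mem_filter.mpr ⟨mem_Icc.mpr ⟨h1, h2⟩, hbad⟩
  exact hne (mem_singleton.mp this)

end Filtration

section Shelling

variable {X : Finset (Finset V)} {σ : ℕ → Finset V} {m j : ℕ} {W : Finset V}
  {z : Finset (Finset V)}

lemma singleton_mem_cUnion_of_mem_bdry {x : V}
    (h : {x} ∈ bdry (z ∩ indOn (cUnion σ j) W)) : {x} ∈ cUnion σ j :=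
  (mem_filter.mp (mem_of_mem_bdry (isComplex_indOn (isComplex_cUnion σ j) W)
    inter_subset_right h)).1

lemma exists_homologous_of_shelling_step (hX : IsComplex X) (henum : IsFacetEnum X m σ)
    (hj : j < m) {τ : Finset V} (hτσ : τ ⊆ σ j) (hτ : ∀ x ∈ τ, ∀ y ∈ τ, {x, y} ∈ cUnion σ j)
    (hz : IsNCycle (indOn (cUnion σ (j + 1)) W) 1 z)
    (hodd : ∀ x ∈ σ j, {x} ∈ bdry (z ∩ indOn (cUnion σ j) W) → x ∈ τ) :
    ∃ z', IsNCycle (indOn (cUnion σ j) W) 1 z' ∧ Homologous (indOn X W) 1 z z' := by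
  rw [indOn_cUnion_succ] at hz
  refine exists_homologous_of_attach_simplex ?_ (inter_subset_inter hτσ Subset.rfl) ?_ hz ?_
  · intro s hs
    rw [mem_powerset, subset_inter_iff] at hs
    exact mem_filter.mpr ⟨hX _ (henum.mem hj) s hs.1, hs.2⟩
  · intro x hx y hy
    rw [mem_inter] at hx hy
    exact mem_filter.mpr ⟨hτ x hx.1 y hy.1, insert_subset hx.2 (singleton_subset_iff.mpr hy.2)⟩
  · intro x hx h
    rw [mem_inter] at hx ⊢
    exact ⟨hodd x hx.1 h, hx.2⟩

lemma exists_homologous_of_isSimplexC (hX : IsComplex X) (henum : IsFacetEnum X m σ)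
    (hj : j < m) (hgood : j = 0 ∨ IsSimplexC (cUnion σ j ∩ (σ j).powerset))
    (hz : IsNCycle (indOn (cUnion σ (j + 1)) W) 1 z) :
    ∃ z', IsNCycle (indOn (cUnion σ j) W) 1 z' ∧ Homologous (indOn X W) 1 z z' := by
  rcases hgood with rfl | ⟨τ, hτ⟩
  · refine exists_homologous_of_shelling_step hX henum hj (empty_subset _) (by simp) hz ?_
    simp [indOn]
  · have hmem : ∀ s ⊆ τ, s ∈ cUnion σ j ∧ s ⊆ σ j := fun s hs => by
      have h : s ∈ τ.powerset := mem_powerset.mpr hs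
      rwa [← hτ, mem_inter, mem_powerset] at h
    refine exists_homologous_of_shelling_step hX henum hj (hmem τ Subset.rfl).2
      (fun x hx y hy => (hmem _ (insert_subset hx (singleton_subset_iff.mpr hy))).1) hz ?_
    intro x hx h
    have hx' : {x} ∈ cUnion σ j ∩ (σ j).powerset := mem_inter.mpr
      ⟨singleton_mem_cUnion_of_mem_bdry h, mem_powerset.mpr (singleton_subset_iff.mpr hx)⟩
    rwa [hτ, mem_powerset, singleton_subset_iff] at hx'

lemma exists_homologous_of_weakShelling_step (hX : IsComplex X) (henum : IsFacetEnum X m σ)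
    (hj : j < m) {u : V} (hu : IsSimplexC (indOn (cUnion σ j) ((σ j).erase u)))
    (hz : IsNCycle (indOn (cUnion σ (j + 1)) W) 1 z)
    (hzu : {u} ∉ bdry (z ∩ indOn (cUnion σ j) W)) :
    ∃ z', IsNCycle (indOn (cUnion σ j) W) 1 z' ∧ Homologous (indOn X W) 1 z z' := by
  obtain ⟨τ, hτ⟩ := hu
  have hmem : ∀ s ⊆ τ, s ∈ cUnion σ j ∧ s ⊆ (σ j).erase u := fun s hs => by
    have h : s ∈ τ.powerset := mem_powerset.mpr hs
    rwa [← hτ, indOn, mem_filter] at h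
  refine exists_homologous_of_shelling_step hX henum hj
    ((hmem τ Subset.rfl).2.trans (erase_subset u _))
    (fun x hx y hy => (hmem _ (insert_subset hx (singleton_subset_iff.mpr hy))).1) hz ?_
  intro x hx h
  have hxu : x ≠ u := by
    rintro rfl
    exact hzu h
  have hx' : {x} ∈ indOn (cUnion σ j) ((σ j).erase u) := mem_filter.mpr
    ⟨singleton_mem_cUnion_of_mem_bdry h, singleton_subset_iff.mpr (mem_erase.mpr ⟨hxu, hx⟩)⟩
  rwa [hτ, mem_powerset, singleton_subset_iff] at hx'

lemma exists_homologous_of_forall_isSimplexC (hX : IsComplex X) (henum : IsFacetEnum X m σ)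
    {a b : ℕ} (hab : a ≤ b) (hbm : b ≤ m)
    (hgood : ∀ j, a ≤ j → j < b → j = 0 ∨ IsSimplexC (cUnion σ j ∩ (σ j).powerset))
    (hz : IsNCycle (indOn (cUnion σ b) W) 1 z) :
    ∃ z', IsNCycle (indOn (cUnion σ a) W) 1 z' ∧ Homologous (indOn X W) 1 z z' :=
  exists_homologous_of_forall_lt (K := fun j => indOn (cUnion σ j) W) hab
    (fun j hj hjb _ hz => exists_homologous_of_isSimplexC hX henum (by omega) (hgood j hj hjb) hz)
    hz

theorem isNBdry_symmDiff_of_weakShelling (hX : IsComplex X) (henum : IsFacetEnum X m σ)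
    (hws : IsWeakShelling σ m) (hM : Mval σ (m - 1) = 2) {c₁ c₂ : Finset (Finset V)}
    (hc₁ : IsNCycle (indOn X W) 1 c₁) (hc₂ : IsNCycle (indOn X W) 1 c₂)
    (hb₁ : ¬ IsNBdry (indOn X W) 1 c₁) (hb₂ : ¬ IsNBdry (indOn X W) 1 c₂) :
    IsNBdry (indOn X W) 1 (c₁ ∆ c₂) := by
  set K : ℕ → Finset (Finset V) := fun j => indOn (cUnion σ j) W
  obtain ⟨j₁, hj₁, hj₁m, hgood⟩ := exists_forall_isSimplexC_of_Mval_eq_two hM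
  have hgood' : ∀ j < m, j ≠ j₁ → j = 0 ∨ IsSimplexC (cUnion σ j ∩ (σ j).powerset) :=
    fun j hj hne => (Nat.eq_zero_or_pos j).imp_right fun h => hgood j h (by omega) hne
  have hlow : ∀ z, IsNCycle (K j₁) 1 z → IsNBdry (indOn X W) 1 z := by
    intro z hz
    obtain ⟨z', hz', hzz'⟩ := exists_homologous_of_forall_isSimplexC hX henum (Nat.zero_le j₁)
      (by omega) (fun j _ hj => hgood' j (by omega) hj.ne) hz
    have hz'0 : z' = ∅ := subset_empty.mp (by simpa [K, indOn] using hz'.1.1)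
    exact hzz'.isNBdry_iff.mpr (hz'0 ▸ isNBdry_empty _ _)
  obtain ⟨u, -, hu⟩ := hws j₁ hj₁ (by omega)
  have hbad : ∀ z, IsNCycle (K (j₁ + 1)) 1 z → {u} ∉ bdry (z ∩ K j₁) →
      IsNBdry (indOn X W) 1 z := by
    intro z hz hzu
    obtain ⟨z', hz', hzz'⟩ :=
      exists_homologous_of_weakShelling_step hX henum (by omega) hu hz hzu
    exact hzz'.isNBdry_iff.mpr (hlow z' hz')
  have hhigh : ∀ c, IsNCycle (indOn X W) 1 c → ¬ IsNBdry (indOn X W) 1 c →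
      ∃ z, IsNCycle (K (j₁ + 1)) 1 z ∧ Homologous (indOn X W) 1 c z ∧ {u} ∈ bdry (z ∩ K j₁) := by
    intro c hc hnb
    rw [← henum.cUnion_eq hX] at hc
    obtain ⟨z, hz, hcz⟩ := exists_homologous_of_forall_isSimplexC hX henum
      (show j₁ + 1 ≤ m by omega) le_rfl (fun j hj hjm => hgood' j hjm (by omega)) hc
    exact ⟨z, hz, hcz, by_contra fun hzu => hnb (hcz.isNBdry_iff.mpr (hbad z hz hzu))⟩
  obtain ⟨z₁, hz₁, hcz₁, hu₁⟩ := hhigh c₁ hc₁ hb₁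
  obtain ⟨z₂, hz₂, hcz₂, hu₂⟩ := hhigh c₂ hc₂ hb₂
  refine (hcz₁.symmDiff hcz₂).isNBdry_iff.mpr (hbad _ (hz₁.symmDiff hz₂) ?_)
  rw [show (z₁ ∆ z₂) ∩ K j₁ = (z₁ ∩ K j₁) ∆ (z₂ ∩ K j₁) from inf_symmDiff_distrib_right _ _ _,
    bdry_symmDiff, mem_symmDiff]
  tauto

end Shelling

section Degree

def deg (c : Finset (Finset V)) (x : V) : ℕ := #(c.filter (x ∈ ·))

variable {c : Finset (Finset V)}

lemma singleton_mem_bdry_iff (hc : ∀ s ∈ c, s.card = 2) {x : V} :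
    {x} ∈ bdry c ↔ Odd (deg c x) := by
  have hfilter : c.filter (fun s => {x} ⊆ s ∧ s.card = ({x} : Finset V).card + 1) =
      c.filter (x ∈ ·) :=
    filter_congr fun s hs => by simp [hc s hs]
  rw [mem_bdry, hfilter, deg]

lemma even_deg_of_bdry_eq_empty (hc : ∀ s ∈ c, s.card = 2) (h : bdry c = ∅) (x : V) :
    Even (deg c x) :=
  Nat.not_odd_iff_even.mp fun hodd => by simpa [h] using (singleton_mem_bdry_iff hc).mpr hodd

lemma bdry_eq_empty_of_even_deg (hc : ∀ s ∈ c, s.card = 2) (h : ∀ x, Even (deg c x)) :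
    bdry c = ∅ := by
  refine eq_empty_of_forall_notMem fun τ hτ => ?_
  obtain ⟨s, hs, -, hcard⟩ := exists_of_mem_bdry hτ
  have hτ1 : τ.card = 1 := by rw [hc s hs] at hcard; omega
  obtain ⟨x, rfl⟩ := card_eq_one.mp hτ1
  exact Nat.not_even_iff_odd.mpr ((singleton_mem_bdry_iff hc).mp hτ) (h x)

end Degree

section CycleEdges

def cycleEdges (n : ℕ) (f : ℕ → V) : Finset (Finset V) :=
  (range n).image fun i => {f i, f ((i + 1) % n)}

variable {n : ℕ} {f : ℕ → V}

lemma add_one_mod_eq {i n : ℕ} (hi : i < n) :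
    (i + 1) % n = if i + 1 = n then 0 else i + 1 := by
  split_ifs with h
  · rw [h, Nat.mod_self]
  · exact Nat.mod_eq_of_lt (by omega)

section
variable (hn : 3 ≤ n) (hf : ∀ i j, i < n → j < n → f i = f j → i = j)
include hn hf

omit [Fintype V] in
lemma card_edge {i : ℕ} (hi : i < n) : ({f i, f ((i + 1) % n)} : Finset V).card = 2 := by
  refine card_pair fun h => ?_
  have := hf _ _ hi (Nat.mod_lt _ (by omega)) h
  rw [add_one_mod_eq hi] at this
  split_ifs at this <;> omega

omit [Fintype V] in
lemma injOn_edge : Set.InjOn (fun i => ({f i, f ((i + 1) % n)} : Finset V)) (range n) := by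
  intro i hi j hj hij
  simp only [coe_range, Set.mem_Iio] at hi hj hij
  have hmod : ∀ k < n, (k + 1) % n < n := fun k _ => Nat.mod_lt _ (by omega)
  have hfi : f i ∈ ({f j, f ((j + 1) % n)} : Finset V) := hij ▸ mem_insert_self _ _
  have hfj : f j ∈ ({f i, f ((i + 1) % n)} : Finset V) := hij ▸ mem_insert_self _ _
  simp only [mem_insert, mem_singleton] at hfi hfj
  rcases hfi with h | h
  · exact hf _ _ hi hj h
  rcases hfj with h' | h'
  · exact (hf _ _ hj hi h').symm
  have h₁ := hf _ _ hi (hmod j hj) h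
  have h₂ := hf _ _ hj (hmod i hi) h'
  rw [add_one_mod_eq hi] at h₂
  rw [add_one_mod_eq hj] at h₁
  split_ifs at h₁ h₂ <;> omega

omit [Fintype V] in
lemma card_cycleEdges : #(cycleEdges n f) = n := by
  rw [cycleEdges, card_image_of_injOn (injOn_edge hn hf), card_range]

omit [Fintype V] in
lemma even_deg_cycleEdges (x : V) : Even (deg (cycleEdges n f) x) := by
  rw [deg, cycleEdges, filter_image,
    card_image_of_injOn ((injOn_edge hn hf).mono (coe_subset.mpr (filter_subset _ _)))]
  by_cases hx : ∃ k < n, f k = x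
  · obtain ⟨k, hk, rfl⟩ := hx
    obtain ⟨k', hk'n, hk'k, hk'⟩ : ∃ k' < n, k' ≠ k ∧ ∀ i < n, (i + 1) % n = k ↔ i = k' := by
      refine ⟨if k = 0 then n - 1 else k - 1, by split_ifs <;> omega, by split_ifs <;> omega,
        fun i hi => ?_⟩
      rcases eq_or_ne (i + 1) n with h | h
      · rw [h, Nat.mod_self]
        split_ifs <;> omega
      · rw [Nat.mod_eq_of_lt (by omega)]
        split_ifs <;> omega
    have hfilter : (range n).filter (fun i => f k ∈ ({f i, f ((i + 1) % n)} : Finset V)) =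
        {k, k'} := by
      ext i
      simp only [mem_filter, mem_range, mem_insert, mem_singleton]
      constructor
      · rintro ⟨hi, h | h⟩
        · exact Or.inl (hf _ _ hk hi h).symm
        · exact Or.inr ((hk' i hi).mp (hf _ _ hk (Nat.mod_lt _ (by omega)) h).symm)
      · rintro (rfl | rfl)
        · exact ⟨hk, Or.inl rfl⟩
        · exact ⟨hk'n, Or.inr (congrArg f ((hk' i hk'n).mpr rfl).symm)⟩
    rw [hfilter, card_pair hk'k.symm]
    exact even_two
  · simp only [not_exists, not_and] at hx
    rw [filter_false_of_mem fun i hi h => ?_, card_empty]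
    · exact ⟨0, rfl⟩
    · rw [mem_range] at hi
      rcases mem_insert.mp h with h | h
      · exact hx i hi h.symm
      · exact hx _ (Nat.mod_lt _ (by omega)) (mem_singleton.mp h).symm

lemma bdry_cycleEdges : bdry (cycleEdges n f) = ∅ := by
  refine bdry_eq_empty_of_even_deg (fun s hs => ?_) (even_deg_cycleEdges hn hf)
  obtain ⟨i, hi, rfl⟩ := mem_image.mp hs
  exact card_edge hn hf (mem_range.mp hi)

end

omit [Fintype V] in
lemma biUnion_cycleEdges (hn : 0 < n) : (cycleEdges n f).biUnion id = (range n).image f := by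
  ext x
  simp only [cycleEdges, mem_biUnion, mem_image, mem_range, id]
  constructor
  · rintro ⟨_, ⟨i, hi, rfl⟩, h⟩
    rcases mem_insert.mp h with h | h
    exacts [⟨i, hi, h.symm⟩, ⟨_, Nat.mod_lt _ hn, (mem_singleton.mp h).symm⟩]
  · rintro ⟨k, hk, rfl⟩
    exact ⟨_, ⟨k, hk, rfl⟩, mem_insert_self _ _⟩

omit [Fintype V] in
lemma cycleEdges_arc_subset {p q : ℕ} (hq : q < n) (hpq : p < q) :
    cycleEdges (q - p + 1) (fun k => f (p + k)) ⊆ insert {f p, f q} (cycleEdges n f) := by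
  intro e he
  obtain ⟨k, hk, rfl⟩ := mem_image.mp he
  rw [mem_range] at hk
  dsimp only
  rw [add_one_mod_eq hk]
  split_ifs with h
  · rw [add_zero, show p + k = q by omega, pair_comm]
    exact mem_insert_self _ _
  · refine mem_insert_of_mem (mem_image.mpr ⟨p + k, mem_range.mpr (by omega), ?_⟩)
    rw [add_one_mod_eq (by omega), if_neg (by omega), add_assoc]

omit [Fintype V] in
lemma exists_chord_indices {e : Finset V} (he : e.card = 2) (heV : e ⊆ (range n).image f)
    (hec : e ∉ cycleEdges n f) :
    ∃ p q, p + 2 ≤ q ∧ q + 2 ≤ n + p ∧ q < n ∧ e = {f p, f q} := by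
  obtain ⟨x, y, hxy, rfl⟩ := card_eq_two.mp he
  obtain ⟨a, ha, rfl⟩ := mem_image.mp (heV (mem_insert_self x {y}))
  obtain ⟨b, hb, rfl⟩ := mem_image.mp (heV (mem_insert_of_mem (mem_singleton_self y)))
  rw [mem_range] at ha hb
  have hab : a ≠ b := by rintro rfl; exact hxy rfl
  obtain ⟨p, q, hpq, hq, hpqe⟩ : ∃ p q, p < q ∧ q < n ∧ ({f a, f b} : Finset V) = {f p, f q} := by
    rcases lt_or_gt_of_ne hab with h | h
    · exact ⟨a, b, h, hb, rfl⟩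
    · exact ⟨b, a, h, ha, pair_comm _ _⟩
  rw [hpqe] at hec ⊢
  refine ⟨p, q, ?_, ?_, hq, rfl⟩ <;> by_contra hlt <;> apply hec
  · refine mem_image.mpr ⟨p, mem_range.mpr (by omega), ?_⟩
    rw [add_one_mod_eq (by omega), if_neg (by omega), show p + 1 = q by omega]
  · refine mem_image.mpr ⟨q, mem_range.mpr hq, ?_⟩
    rw [add_one_mod_eq hq, if_pos (by omega), show p = 0 by omega, pair_comm]

/-- The chord closes the arc `f p, …, f q` into a cycle `c₁`; the rest of the cycle together with
the chord is the other one, `c ∆ c₁`. -/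
lemma exists_split_of_chord (hn : 3 ≤ n) (hf : ∀ i j, i < n → j < n → f i = f j → i = j)
    {p q : ℕ} (hpq : p + 2 ≤ q) (hqp : q + 2 ≤ n + p) (hq : q < n)
    (hec : {f p, f q} ∉ cycleEdges n f) :
    ∃ c₁ ⊆ insert {f p, f q} (cycleEdges n f), (∀ s ∈ c₁, s.card = 2) ∧ bdry c₁ = ∅ ∧
      #c₁ < n ∧ #(cycleEdges n f ∆ c₁) < n := by
  set c₁ := cycleEdges (q - p + 1) (fun k => f (p + k))
  have hf₁ : ∀ i j, i < q - p + 1 → j < q - p + 1 → f (p + i) = f (p + j) → i = j :=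
    fun i j hi hj h => by have := hf _ _ (by omega) (by omega) h; omega
  have hc₁sub := cycleEdges_arc_subset (f := f) hq (by omega : p < q)
  have hec₁ : {f p, f q} ∈ c₁ := by
    refine mem_image.mpr ⟨q - p, mem_range.mpr (by omega), ?_⟩
    rw [add_one_mod_eq (by omega), if_pos rfl]
    simp only [add_zero, show p + (q - p) = q by omega]
    exact pair_comm _ _
  have hinter : cycleEdges n f ∩ c₁ = c₁.erase {f p, f q} := by
    ext s
    simp only [mem_inter, mem_erase]
    constructor
    · rintro ⟨hs, hs₁⟩
      exact ⟨fun h => hec (h ▸ hs), hs₁⟩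
    · rintro ⟨hs, hs₁⟩
      exact ⟨(mem_insert.mp (hc₁sub hs₁)).resolve_left hs, hs₁⟩
  have hcard₁ : #c₁ = q - p + 1 := card_cycleEdges (by omega) hf₁
  have hcard := card_symmDiff_add_two_mul_card_inter (cycleEdges n f) c₁
  rw [hinter, card_erase_of_mem hec₁, hcard₁, card_cycleEdges hn hf] at hcard
  refine ⟨c₁, hc₁sub, fun s hs => ?_, bdry_cycleEdges (by omega) hf₁, by omega, by omega⟩
  obtain ⟨i, hi, rfl⟩ := mem_image.mp hs
  exact card_edge (by omega) hf₁ (mem_range.mp hi)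

end CycleEdges

section Extraction

variable {c : Finset (Finset V)}

omit [Fintype V] in
lemma exists_next_edge (hc : ∀ s ∈ c, s.card = 2) (heven : ∀ x, Even (deg c x)) {p q : V}
    (hpq : {p, q} ∈ c) : ∃ r, {q, r} ∈ c ∧ r ≠ p ∧ r ≠ q := by
  have hdeg : 1 < #(c.filter (q ∈ ·)) := by
    have hpos : 0 < #(c.filter (q ∈ ·)) :=
      card_pos.mpr ⟨_, mem_filter.mpr ⟨hpq, mem_insert_of_mem (mem_singleton_self q)⟩⟩
    obtain ⟨k, hk⟩ := heven q
    rw [deg] at hk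
    omega
  obtain ⟨e, he, hepq⟩ := exists_mem_ne hdeg {p, q}
  obtain ⟨hec, hqe⟩ := mem_filter.mp he
  obtain ⟨r, hr⟩ := card_eq_one.mp (show (e.erase q).card = 1 by
    rw [card_erase_of_mem hqe, hc e hec])
  have hre : e = {q, r} := by rw [← insert_erase hqe, hr]
  refine ⟨r, hre ▸ hec, fun hrp => hepq (by rw [hre, hrp, pair_comm]), fun hrq => ?_⟩
  exact notMem_erase q e (by rw [hr, hrq]; exact mem_singleton_self q)

omit [Fintype V] in
lemma exists_nonbacktracking_walk (hc : ∀ s ∈ c, s.card = 2) (heven : ∀ x, Even (deg c x))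
    {p q : V} (hpq : {p, q} ∈ c) (hne : p ≠ q) :
    ∃ w : ℕ → V, ∀ k, {w k, w (k + 1)} ∈ c ∧ w k ≠ w (k + 1) ∧ w (k + 2) ≠ w k := by
  have hnext : ∀ x : V × V, ({x.1, x.2} : Finset V) ∈ c ∧ x.1 ≠ x.2 →
      ∃ r, ({x.2, r} : Finset V) ∈ c ∧ r ≠ x.1 ∧ r ≠ x.2 :=
    fun x h => exists_next_edge hc heven h.1
  have : Nonempty V := ⟨p⟩
  choose! r hr using hnext
  set F : V × V → V × V := fun x => (x.2, r x)
  have hF : ∀ k, ({(F^[k] (p, q)).1, (F^[k] (p, q)).2} : Finset V) ∈ c ∧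
      (F^[k] (p, q)).1 ≠ (F^[k] (p, q)).2 := by
    intro k
    induction k with
    | zero => exact ⟨hpq, hne⟩
    | succ k ih =>
      rw [Function.iterate_succ_apply']
      exact ⟨(hr _ ih).1, (hr _ ih).2.2.symm⟩
  refine ⟨fun k => (F^[k] (p, q)).1, fun k => ?_⟩
  simp only [Function.iterate_succ_apply']
  exact ⟨(hF k).1, (hF k).2, (hr _ (hF k)).2.1⟩

/-- The first return of a non-backtracking walk to an earlier vertex closes a cycle. -/
lemma exists_cycle_of_nonbacktracking (w : ℕ → V) (hne : ∀ k, w k ≠ w (k + 1))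
    (hnb : ∀ k, w (k + 2) ≠ w k) :
    ∃ n, 3 ≤ n ∧ ∃ f : ℕ → V, (∀ i j, i < n → j < n → f i = f j → i = j) ∧
      ∀ i < n, ∃ k, ({f i, f ((i + 1) % n)} : Finset V) = {w k, w (k + 1)} := by
  classical
  have hrep : ∃ j, ∃ i < j, w i = w j := by
    obtain ⟨a, b, hab, h⟩ := Finite.exists_ne_map_eq_of_infinite w
    rcases lt_or_gt_of_ne hab with h' | h'
    exacts [⟨b, a, h', h⟩, ⟨a, b, h', h.symm⟩]
  obtain ⟨i, hij, hwij⟩ := Nat.find_spec hrep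
  set j := Nat.find hrep
  have hmin : ∀ a b, a < b → b < j → w a ≠ w b :=
    fun a b hab hb h => Nat.find_min hrep hb ⟨a, hab, h⟩
  refine ⟨j - i, ?_, fun k => w (i + k), fun a b ha hb h => ?_, fun k hk => ⟨i + k, ?_⟩⟩
  · by_contra hlt
    rcases (by omega : j = i + 1 ∨ j = i + 2) with h | h
    · exact hne i (h ▸ hwij)
    · exact hnb i (h ▸ hwij).symm
  · by_contra hab
    rcases lt_or_gt_of_ne hab with h' | h'
    exacts [hmin _ _ (by omega) (by omega) h, hmin _ _ (by omega) (by omega) h.symm]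
  · dsimp only
    rw [add_one_mod_eq hk]
    split_ifs with h
    · rw [add_zero, hwij, show j = i + k + 1 by omega]
    · rw [add_assoc]

lemma exists_isCycleEdges_subset (hc : ∀ s ∈ c, s.card = 2) (hbdry : bdry c = ∅)
    (hne : c.Nonempty) : ∃ c' ⊆ c, IsCycleEdges c' := by
  obtain ⟨e, he⟩ := hne
  obtain ⟨p, q, hpq, rfl⟩ := card_eq_two.mp (hc e he)
  obtain ⟨w, hw⟩ := exists_nonbacktracking_walk hc (even_deg_of_bdry_eq_empty hc hbdry) he hpq
  obtain ⟨n, hn, f, hf, hedge⟩ :=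
    exists_cycle_of_nonbacktracking w (fun k => (hw k).2.1) (fun k => (hw k).2.2)
  refine ⟨cycleEdges n f, fun e he => ?_, n, hn, f, hf, rfl⟩
  obtain ⟨i, hi, rfl⟩ := mem_image.mp he
  obtain ⟨k, hk⟩ := hedge i (mem_range.mp hi)
  exact hk ▸ (hw k).1

end Extraction

section MinimalCycle

variable {A c : Finset (Finset V)}

lemma isCycleEdges_of_minimal (hc : IsNCycle A 1 c) (hnb : ¬ IsNBdry A 1 c)
    (hmin : ∀ c', IsNCycle A 1 c' → #c' < #c → IsNBdry A 1 c') : IsCycleEdges c := by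
  have hne : c.Nonempty := nonempty_iff_ne_empty.mpr (by rintro rfl; exact hnb (isNBdry_empty A 1))
  obtain ⟨c', hc'c, n, hn, f, hf, rfl⟩ := exists_isCycleEdges_subset hc.1.2 hc.2 hne
  change cycleEdges n f ⊆ c at hc'c
  suffices cycleEdges n f = c from this ▸ ⟨n, hn, f, hf, rfl⟩
  by_contra hne'
  have hc' : IsNCycle A 1 (cycleEdges n f) :=
    ⟨⟨hc'c.trans hc.1.1, fun s hs => hc.1.2 s (hc'c hs)⟩, bdry_cycleEdges hn hf⟩
  have hcard := card_symmDiff_add_two_mul_card_inter c (cycleEdges n f)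
  rw [inter_eq_right.mpr hc'c, card_cycleEdges hn hf] at hcard
  have hlt : n < #c := by
    rw [← card_cycleEdges hn hf]; exact card_lt_card (ssubset_of_subset_of_ne hc'c hne')
  apply hnb
  have h := IsNBdry.symmDiff (hmin _ (hc.symmDiff hc') (by omega))
    (hmin _ hc' (by rwa [card_cycleEdges hn hf]))
  rwa [symmDiff_symmDiff_cancel_right] at h

lemma mem_of_minimal (hc : IsNCycle A 1 c) (hnb : ¬ IsNBdry A 1 c)
    (hmin : ∀ c', IsNCycle A 1 c' → #c' < #c → IsNBdry A 1 c') {n : ℕ} {f : ℕ → V}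
    (hn : 3 ≤ n) (hf : ∀ i j, i < n → j < n → f i = f j → i = j) (hcf : c = cycleEdges n f)
    {e : Finset V} (heA : e ∈ A) (he : e.card = 2) (heV : e ⊆ c.biUnion id) : e ∈ c := by
  subst hcf
  by_contra hec
  rw [biUnion_cycleEdges (by omega)] at heV
  obtain ⟨p, q, hpq, hqp, hq, rfl⟩ := exists_chord_indices he heV hec
  obtain ⟨c₁, hc₁sub, hc₁card, hc₁bdry, hlt₁, hlt₂⟩ := exists_split_of_chord hn hf hpq hqp hq hec
  have hc₁ : IsNCycle A 1 c₁ := by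
    refine ⟨⟨fun s hs => ?_, hc₁card⟩, hc₁bdry⟩
    rcases mem_insert.mp (hc₁sub hs) with rfl | h
    exacts [heA, hc.1.1 h]
  apply hnb
  have h := IsNBdry.symmDiff (hmin _ (hc.symmDiff hc₁) (by rwa [card_cycleEdges hn hf]))
    (hmin _ hc₁ (by rwa [card_cycleEdges hn hf]))
  rwa [symmDiff_symmDiff_cancel_right] at h

theorem exists_induced_cycle (hH : ∃ c, IsNCycle A 1 c ∧ ¬ IsNBdry A 1 c) :
    ∃ c, IsCycleEdges c ∧ IsNChain A 1 c ∧
      (∀ e ∈ A, e.card = 2 → e ⊆ c.biUnion id → e ∈ c) ∧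
      IsNCycle A 1 c ∧ ¬ IsNBdry A 1 c := by
  obtain ⟨c, ⟨hc, hnb⟩, hmin⟩ :=
    (measure card).wf.has_min {c | IsNCycle A 1 c ∧ ¬ IsNBdry A 1 c} hH
  have hmin' : ∀ c', IsNCycle A 1 c' → #c' < #c → IsNBdry A 1 c' :=
    fun c' hc' hlt => by_contra fun hnb' => hmin c' ⟨hc', hnb'⟩ hlt
  obtain ⟨n, hn, f, hf, hcf⟩ := isCycleEdges_of_minimal hc hnb hmin'
  exact ⟨c, ⟨n, hn, f, hf, hcf⟩, hc.1, fun e heA he heV =>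
    mem_of_minimal hc hnb hmin' hn hf hcf heA he heV, hc, hnb⟩

end MinimalCycle

theorem equality_case_two_general (X : Finset (Finset V)) (hX : IsComplex X)
    (hws : ∃ (m : ℕ) (σ : ℕ → Finset V), 0 < m ∧ IsFacetEnum X m σ ∧
      IsWeakShelling σ m ∧ Mval σ (m - 1) = 2)
    (W : Finset V)
    (hH : ∃ c, IsNCycle (indOn X W) 1 c ∧ ¬ IsNBdry (indOn X W) 1 c) :
    (∃ c, IsCycleEdges c ∧ IsNChain (indOn X W) 1 c ∧
        (∀ e ∈ indOn X W, e.card = 2 → e ⊆ c.biUnion id → e ∈ c) ∧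
        IsNCycle (indOn X W) 1 c ∧ ¬ IsNBdry (indOn X W) 1 c) ∧
    (∀ c₁ c₂, IsNCycle (indOn X W) 1 c₁ → IsNCycle (indOn X W) 1 c₂ →
      ¬ IsNBdry (indOn X W) 1 c₁ → ¬ IsNBdry (indOn X W) 1 c₂ →
      IsNBdry (indOn X W) 1 (chAdd c₁ c₂)) := by
  obtain ⟨m, σ, -, henum, hshell, hM⟩ := hws
  exact ⟨exists_induced_cycle hH, fun c₁ c₂ hc₁ hc₂ hb₁ hb₂ =>
    isNBdry_symmDiff_of_weakShelling hX henum hshell hM hc₁ hc₂ hb₁ hb₂⟩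

/-- if `L(X) = M(X) = 2` and `X` admits a weak shelling realizing `M(X)`,
then whenever `H̃₁(X[W]) ≠ 0`, the `1`-skeleton of `X[W]` contains an induced cycle whose
class generates `H̃₁(X[W])`, and `dim H̃₁(X[W]) ≤ 1`. -/
theorem equality_case_two (X : Finset (Finset V)) (hX : IsComplex X)
    (hL : lerayNum X = 2) (hM : Mnum X = 2)
    (hws : ∃ (m : ℕ) (σ : ℕ → Finset V), 0 < m ∧ IsFacetEnum X m σ ∧
      IsWeakShelling σ m ∧ Mval σ (m - 1) = 2)
    (W : Finset V)
    (hH : ∃ c, IsNCycle (indOn X W) 1 c ∧ ¬ IsNBdry (indOn X W) 1 c) :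
    (∃ c, IsCycleEdges c ∧ IsNChain (indOn X W) 1 c ∧
        (∀ e ∈ indOn X W, e.card = 2 → e ⊆ c.biUnion id → e ∈ c) ∧
        IsNCycle (indOn X W) 1 c ∧ ¬ IsNBdry (indOn X W) 1 c) ∧
    (∀ c₁ c₂, IsNCycle (indOn X W) 1 c₁ → IsNCycle (indOn X W) 1 c₂ →
      ¬ IsNBdry (indOn X W) 1 c₁ → ¬ IsNBdry (indOn X W) 1 c₂ →
      IsNBdry (indOn X W) 1 (chAdd c₁ c₂)) :=
  equality_case_two_general X hX hws W hH
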